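/- Let A, N be positive integers, σ : ℝ → ℝ any function, and W, C be N×N real matrices. Define W̃[c,d,i,a,b,j] = [d = a]·C[i,j] + [d = b]·[c = a]·W[i,j]. Then the VSML update map F(s)[a,b,j] = σ(∑_i s[a,b,i]·W[i,j] + ∑_{c,i} s[c,a,i]·C[i,j]) coincides with the single-RNN update map G(s)[a,b,j] = σ(∑_{c,d,i} s[c,d,i]·W̃[c,d,i,a,b,j]) as functions on (Fin A × Fin A × Fin N → ℝ). -/

import Mathlib

/-!
Unfolding the sparse weight `W̃`, the sum over the big RNN's state splits into a message part and
a recurrent part. The Kronecker factor `[d = a]` collapses the message part to the messages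
`∑ c i, s c a i * C i j` arriving at sub-RNN `(a, b)`, and `[d = b] [c = a]` collapses the recurrent
part to sub-RNN `(a, b)`'s own term `∑ i, s a b i * W i j`. So both updates apply `σ` to the same
pre-activation.
-/

open Finset

section

variable {R α ι : Type*} [CommSemiring R] [Fintype α] [DecidableEq α] [Fintype ι]

/-- The weight `W̃[c,d,i,a,b,j]` of the single RNN equivalent to the VSML grid. -/
def vsmlWeight (W C : ι → ι → R) (c d : α) (i : ι) (a b : α) (j : ι) : R :=
  (if d = a then C i j else 0) + (if d = b then 1 else 0) * (if c = a then W i j else 0)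

theorem sum_mul_ite_message (s : α → α → ι → R) (C : ι → ι → R) (a : α) (j : ι) :
    ∑ c, ∑ d, ∑ i, s c d i * (if d = a then C i j else 0) = ∑ c, ∑ i, s c a i * C i j := by
  simp [mul_ite]

theorem sum_mul_ite_recurrent (s : α → α → ι → R) (W : ι → ι → R) (a b : α) (j : ι) :
    ∑ c, ∑ d, ∑ i, s c d i * ((if d = b then 1 else 0) * (if c = a then W i j else 0)) =
      ∑ i, s a b i * W i j := by
  simp [mul_ite, ite_mul]

theorem sum_mul_vsmlWeight (s : α → α → ι → R) (W C : ι → ι → R) (a b : α) (j : ι) :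
    ∑ c, ∑ d, ∑ i, s c d i * vsmlWeight W C c d i a b j =
      ∑ i, s a b i * W i j + ∑ c, ∑ i, s c a i * C i j := by
  simp only [vsmlWeight, mul_add, sum_add_distrib, sum_mul_ite_message, sum_mul_ite_recurrent]
  exact add_comm _ _

end

theorem stmt4_general (A N : ℕ)
    (σ : ℝ → ℝ) (W C : Fin N → Fin N → ℝ)
    (Wt : Fin A → Fin A → Fin N → Fin A → Fin A → Fin N → ℝ)
    (hWt : ∀ c d i a b j, Wt c d i a b j =
      (if d = a then C i j else 0) +
      (if d = b then (1:ℝ) else 0) * (if c = a then W i j else 0))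
    (F G : (Fin A → Fin A → Fin N → ℝ) → (Fin A → Fin A → Fin N → ℝ))
    (hF : ∀ s a b j, F s a b j =
      σ ((∑ i, s a b i * W i j) + ∑ c, ∑ i, s c a i * C i j))
    (hG : ∀ s a b j, G s a b j =
      σ (∑ c, ∑ d, ∑ i, s c d i * Wt c d i a b j)) :
    F = G := by
  have hWt_eq : Wt = vsmlWeight W C := by
    funext c d i a b j
    exact hWt c d i a b j
  funext s a b j
  rw [hF, hG, hWt_eq, sum_mul_vsmlWeight]

theorem stmt4 (A N : ℕ) (hA : 0 < A) (hN : 0 < N)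
    (σ : ℝ → ℝ) (W C : Fin N → Fin N → ℝ)
    (Wt : Fin A → Fin A → Fin N → Fin A → Fin A → Fin N → ℝ)
    (hWt : ∀ c d i a b j, Wt c d i a b j =
      (if d = a then C i j else 0) +
      (if d = b then (1:ℝ) else 0) * (if c = a then W i j else 0))
    (F G : (Fin A → Fin A → Fin N → ℝ) → (Fin A → Fin A → Fin N → ℝ))
    (hF : ∀ s a b j, F s a b j =
      σ ((∑ i, s a b i * W i j) + ∑ c, ∑ i, s c a i * C i j))
    (hG : ∀ s a b j, G s a b j =
      σ (∑ c, ∑ d, ∑ i, s c d i * Wt c d i a b j)) :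
    F = G :=
  stmt4_general A N σ W C Wt hWt F G hF hG
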